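/- For every real number x with x > 1/3 and every real number z with z > 3x + √(9x² − 1), the series ∑_{n=0}^∞ (1/(4n+3)) · C_{4n+3}(x)/z^{4n+3} converges and equals (1/8) · ln((z² + 6xz + 1)/(z² − 6xz + 1)) − (1/4) · arctan(6xz/(z² − 1)). -/

import Mathlib

/-- Lucas-balancing polynomials: `C 0 x = 1`, `C 1 x = 3x`,
`C (n+2) x = 6 x C (n+1) x - C n x`. -/
def lucasBalancing (x : ℝ) : ℕ → ℝ
  | 0 => 1
  | 1 => 3 * x
  | n + 2 => 6 * x * lucasBalancing x (n + 1) - lucasBalancing x n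

lemma lb_closed (x s : ℝ) (hs : s ^ 2 = 9 * x ^ 2 - 1) :
    ∀ n, lucasBalancing x n = ((3*x+s)^n + (3*x-s)^n)/2
  | 0 => by simp [lucasBalancing]
  | 1 => by simp [lucasBalancing]
  | (n+2) => by
      show 6 * x * lucasBalancing x (n + 1) - lucasBalancing x n = _
      rw [lb_closed x s hs (n+1), lb_closed x s hs n]
      linear_combination (-((3*x+s)^n + (3*x-s)^n)/2) * hs

lemma hasSum_oddpow (t : ℝ) (ht : |t| < 1) :
    HasSum (fun n : ℕ => t ^ (2*n+1) / (2*(n:ℝ)+1))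
      ((Real.log (1+t) - Real.log (1-t)) / 2) := by
  have h1 := Real.hasSum_pow_div_log_of_abs_lt_one ht
  have h2 := Real.hasSum_pow_div_log_of_abs_lt_one (x := -t) (by rwa [abs_neg])
  have h3 := (h1.sub h2).div_const 2
  have hinj : Function.Injective (fun m : ℕ => 2*m) := fun a b h => by have h' : 2*a = 2*b := h; omega
  have hz : ∀ n ∉ Set.range (fun m : ℕ => 2*m),
      (t ^ (n+1) / (n+1) - (-t) ^ (n+1) / (n+1)) / 2 = 0 := by
    intro n hn
    have hodd : Odd n := by
      rcases Nat.even_or_odd n with he | ho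
      · obtain ⟨k, rfl⟩ := he
        exact absurd ⟨k, show 2*k = k+k by ring⟩ hn
      · exact ho
    have : Even (n+1) := Nat.even_add_one.mpr (Nat.not_even_iff_odd.mpr hodd)
    rw [this.neg_pow]
    ring
  have h4 := (Function.Injective.hasSum_iff hinj hz).mpr h3
  have h5 : ((fun n : ℕ => (t ^ (n+1) / (n+1) - (-t) ^ (n+1) / (n+1)) / 2) ∘
      (fun m : ℕ => 2*m)) = fun n : ℕ => t ^ (2*n+1) / (2*(n:ℝ)+1) := by
    funext m
    have he : Odd (2*m+1) := ⟨m, by ring⟩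
    simp only [Function.comp_apply]
    rw [he.neg_pow]
    push_cast
    ring
  have h6 : -Real.log (1 - t) - -Real.log (1 - -t) = Real.log (1+t) - Real.log (1-t) := by
    rw [sub_neg_eq_add]; ring
  rw [h5, h6] at h4
  exact h4

lemma hasSum_mod4pow (t : ℝ) (ht : |t| < 1) :
    HasSum (fun n : ℕ => t ^ (4*n+3) / (4*(n:ℝ)+3))
      ((Real.log (1+t) - Real.log (1-t)) / 4 - Real.arctan t / 2) := by
  have h1 := hasSum_oddpow t ht
  have h2 := Real.hasSum_arctan (x := t) (by simpa using ht)
  have h3 := (h1.sub h2).div_const 2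
  push_cast at h3
  have hinj : Function.Injective (fun m : ℕ => 2*m+1) := fun a b h => by
    have h' : 2*a+1 = 2*b+1 := h; omega
  have hz : ∀ n ∉ Set.range (fun m : ℕ => 2*m+1),
      (t ^ (2*n+1) / (2*(n:ℝ)+1) - (-1:ℝ) ^ n * t ^ (2*n+1) / (2*n+1)) / 2 = 0 := by
    intro n hn
    have he : Even n := by
      rcases Nat.even_or_odd n with he | ho
      · exact he
      · obtain ⟨k, rfl⟩ := ho
        exact (hn ⟨k, rfl⟩).elim
    rw [he.neg_one_pow]
    ring
  have h4 := (Function.Injective.hasSum_iff hinj hz).mpr h3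
  have h5 : ((fun n : ℕ => (t ^ (2*n+1) / (2*(n:ℝ)+1) - (-1:ℝ) ^ n * t ^ (2*n+1) / (2*n+1)) / 2) ∘
      (fun m : ℕ => 2*m+1)) = fun n : ℕ => t ^ (4*n+3) / (4*(n:ℝ)+3) := by
    funext m
    have ho : Odd (2*m+1) := ⟨m, by ring⟩
    simp only [Function.comp_apply]
    rw [ho.neg_one_pow]
    have he : 2*(2*m+1)+1 = 4*m+3 := by ring
    rw [he]
    push_cast
    ring
  rw [h5] at h4
  convert h4 using 1
  ring

theorem lucasBalancing_subseries (x z : ℝ) (hx : x > 1 / 3)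
    (hz : z > 3 * x + Real.sqrt (9 * x ^ 2 - 1)) :
    HasSum
      (fun n : ℕ => 1 / (4 * (n : ℝ) + 3) *
        (lucasBalancing x (4 * n + 3) / z ^ (4 * n + 3)))
      (1 / 8 * Real.log ((z ^ 2 + 6 * x * z + 1) / (z ^ 2 - 6 * x * z + 1)) -
       1 / 4 * Real.arctan (6 * x * z / (z ^ 2 - 1))) := by
  have hx0 : (0:ℝ) < x := by linarith
  have h9 : (0:ℝ) ≤ 9 * x ^ 2 - 1 := by nlinarith
  set s := Real.sqrt (9 * x ^ 2 - 1) with hsdef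
  have hs0 : 0 ≤ s := Real.sqrt_nonneg _
  have hs2 : s ^ 2 = 9 * x ^ 2 - 1 := Real.sq_sqrt h9
  clear_value s
  have hα1 : 1 ≤ 3*x + s := by nlinarith
  have hβ0 : 0 < 3*x - s := by nlinarith [hs0, hx0]
  have hz1 : 1 < z := by linarith
  have hz0 : 0 < z := by linarith
  have hzα : 3*x + s < z := hz
  have hzβ : 3*x - s < z := by linarith
  have ha0 : 0 < (3*x+s)/z := div_pos (by linarith) hz0
  have ha1 : (3*x+s)/z < 1 := (div_lt_one hz0).mpr hzα
  have hb0 : 0 < (3*x-s)/z := div_pos hβ0 hz0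
  have hb1 : (3*x-s)/z < 1 := (div_lt_one hz0).mpr hzβ
  have hA := hasSum_mod4pow ((3*x+s)/z) (abs_lt.mpr ⟨by linarith, ha1⟩)
  have hB := hasSum_mod4pow ((3*x-s)/z) (abs_lt.mpr ⟨by linarith, hb1⟩)
  have H := (hA.add hB).div_const 2
  have hzne : z ≠ 0 := ne_of_gt hz0
  have hfun : (fun n : ℕ => 1 / (4 * (n : ℝ) + 3) *
        (lucasBalancing x (4 * n + 3) / z ^ (4 * n + 3)))
      = fun n : ℕ => (((3*x+s)/z) ^ (4*n+3)/(4*(n:ℝ)+3)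
          + ((3*x-s)/z) ^ (4*n+3)/(4*(n:ℝ)+3))/2 := by
    funext n
    rw [lb_closed x s hs2, div_pow, div_pow]
    ring
  rw [hfun]
  -- now match the values
  have hp1 : (1+(3*x+s)/z)*(1+(3*x-s)/z) = (z^2+6*x*z+1)/z^2 := by
    field_simp
    linear_combination (-1:ℝ) * hs2
  have hp2 : (1-(3*x+s)/z)*(1-(3*x-s)/z) = (z^2-6*x*z+1)/z^2 := by
    field_simp
    linear_combination (-1:ℝ) * hs2
  have hQ : 0 < z^2 - 6*x*z + 1 := by
    have h := mul_pos (mul_pos (sub_pos.mpr ha1) (sub_pos.mpr hb1)) (mul_pos hz0 hz0)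
    nlinarith [hp2]
  have hP : 0 < z^2 + 6*x*z + 1 := by nlinarith
  have e1 : ((1+(3*x+s)/z)*(1+(3*x-s)/z))/((1-(3*x+s)/z)*(1-(3*x-s)/z))
      = (z^2+6*x*z+1)/(z^2-6*x*z+1) := by
    rw [hp1, hp2, div_div_div_cancel_right₀]
    positivity
  have h1a : (0:ℝ) < 1 + (3*x+s)/z := by linarith
  have h1b : (0:ℝ) < 1 + (3*x-s)/z := by linarith
  have h2a : (0:ℝ) < 1 - (3*x+s)/z := by linarith
  have h2b : (0:ℝ) < 1 - (3*x-s)/z := by linarith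
  have hlog : Real.log ((z^2+6*x*z+1)/(z^2-6*x*z+1))
      = (Real.log (1+(3*x+s)/z) + Real.log (1+(3*x-s)/z))
        - (Real.log (1-(3*x+s)/z) + Real.log (1-(3*x-s)/z)) := by
    rw [← e1, Real.log_div (ne_of_gt (mul_pos h1a h1b)) (ne_of_gt (mul_pos h2a h2b)),
      Real.log_mul (ne_of_gt h1a) (ne_of_gt h1b), Real.log_mul (ne_of_gt h2a) (ne_of_gt h2b)]
  have habq : ((3*x+s)/z) * ((3*x-s)/z) = 1 / z^2 := by
    field_simp
    linear_combination (-1:ℝ) * hs2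
  have hab : ((3*x+s)/z) * ((3*x-s)/z) < 1 := by
    rw [habq, div_lt_one (by positivity)]
    exact one_lt_pow₀ hz1 two_ne_zero
  have hz20 : (0:ℝ) < z^2 - 1 := sub_pos.mpr (one_lt_pow₀ hz1 two_ne_zero)
  have hd0 : (0:ℝ) < 1 - 1/z^2 := by
    rw [sub_pos, div_lt_one (by positivity)]
    linarith
  have hargeq : ((3*x+s)/z + (3*x-s)/z)/(1 - ((3*x+s)/z) * ((3*x-s)/z))
      = 6*x*z/(z^2-1) := by
    rw [habq, div_eq_div_iff (ne_of_gt hd0) (ne_of_gt hz20)]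
    field_simp
    ring
  have harc : Real.arctan ((3*x+s)/z) + Real.arctan ((3*x-s)/z)
      = Real.arctan (6*x*z/(z^2-1)) := by
    rw [Real.arctan_add hab, hargeq]
  convert H using 1
  · rfl
  rw [hlog, ← harc]
  ring
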